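/- arXiv:math/0206266 — 3 statements merged into one kernel-verified Lean document; each statement's English description precedes it below -/
import Mathlib

section
/- Orchard Theorem: Let P = {P_1,...,P_n} be a generic configuration of n points in R^d. Define P ∼ Q iff P = Q or n(P,Q) ≡ binom(n-3, d-1) (mod 2). Then ∼ is an equivalence relation on P having at most 2 equivalence classes. -/
/-! For distinct `A B C ∈ P`, split the hyperplanes counted by `n(A,B) + n(B,C) + n(A,C)`
according to whether they pass through the third point. A hyperplane avoiding `A, B, C` puts
each of them on one of its two sides, so it separates an even number of the three pairs. The
hyperplanes through one of the three points are grouped by their other `d - 1` points `T`. The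
side of `Y` with respect to the hyperplane through `T` and `X` is the sign of the orientation
determinant `[T, X, Y]`, which is alternating in `X, Y`; hence of the hyperplanes `T + C`,
`T + A`, `T + B` an odd number separate `A|B`, `B|C`, `A|C` respectively. Therefore
`n(A,B) + n(B,C) + n(A,C) ≡ binom(n-3, d-1) (mod 2)`, which gives transitivity and at most two
classes. -/

open Finset

/-- A finite set of points in `ℝ^d` is a generic configuration if every subset of at most
`d+1` points is affinely independent. -/
def Generic {d : ℕ} (P : Finset (Fin d → ℝ)) : Prop :=
  ∀ S : Finset (Fin d → ℝ), S ⊆ P → S.card ≤ d + 1 →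
    AffineIndependent ℝ (fun x : S => (x : Fin d → ℝ))

/-- The affine hyperplane spanned by the points of `S` separates `A` from `B`:
both points lie off the hyperplane, and in different connected components of its
complement. -/
def Separates {d : ℕ} (S : Finset (Fin d → ℝ)) (A B : Fin d → ℝ) : Prop :=
  A ∉ (affineSpan ℝ (S : Set (Fin d → ℝ)) : Set (Fin d → ℝ)) ∧
  B ∉ (affineSpan ℝ (S : Set (Fin d → ℝ)) : Set (Fin d → ℝ)) ∧
  A ∉ connectedComponentIn ((affineSpan ℝ (S : Set (Fin d → ℝ)) : Set (Fin d → ℝ)))ᶜ B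

open Classical in
/-- `sepCount P A B` = the number `n(A,B)` of hyperplanes spanned by `d` points of
`P \ {A,B}` separating `A` from `B`. -/
noncomputable def sepCount {d : ℕ} (P : Finset (Fin d → ℝ)) (A B : Fin d → ℝ) : ℕ :=
  (((P \ {A, B}).powersetCard d).filter (fun S => Separates S A B)).card

/-- The Orchard relation: `A ∼ B` iff `A = B` or `n(A,B) ≡ binom (n-3) (d-1) (mod 2)`. -/
def OrchardRel {d : ℕ} (P : Finset (Fin d → ℝ)) (A B : Fin d → ℝ) : Prop :=
  A = B ∨ sepCount P A B % 2 = Nat.choose (P.card - 3) (d - 1) % 2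

theorem affineIndependent_iff_linearIndependent_prodMk_one {k V ι : Type*} [Ring k]
    [AddCommGroup V] [Module k V] (q : ι → V) :
    AffineIndependent k q ↔ LinearIndependent k (fun i => ((1 : k), q i)) := by
  rw [affineIndependent_iff, linearIndependent_iff']
  refine forall₂_congr fun s w => ?_
  simp [Prod.ext_iff, Prod.fst_sum, Prod.snd_sum]

theorem AffineIndependent.snoc_iff {k V P : Type*} [DivisionRing k] [AddCommGroup V]
    [Module k V] [AddTorsor V P] {d : ℕ} {p : Fin d → P} (hp : AffineIndependent k p) {x : P} :
    AffineIndependent k (Fin.snoc p x) ↔ x ∉ affineSpan k (Set.range p) := by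
  have himage : Fin.snoc p x '' {i | i ≠ Fin.last d} = Set.range p := by
    ext y
    constructor
    · rintro ⟨i, hi, rfl⟩
      obtain ⟨j, rfl⟩ := Fin.exists_castSucc_eq.2 hi
      simp
    · rintro ⟨j, rfl⟩
      exact ⟨j.castSucc, Fin.castSucc_ne_last j, by simp⟩
  constructor
  · intro h
    simpa [himage] using (h.mem_affineSpan_iff (Fin.last d) {i | i ≠ Fin.last d}).not
  · intro hx
    refine AffineIndependent.affineIndependent_of_notMem_span (k := k) (p := Fin.snoc p x)
      (i := Fin.last d) ?_ (by rwa [Fin.snoc_last, himage])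
    rw [← affineIndependent_equiv (finSuccAboveEquiv (Fin.last d))]
    convert hp
    ext i
    simp [finSuccAboveEquiv_apply]

theorem AffineMap.connectedComponentIn_setOf_ne_zero {E : Type*} [AddCommGroup E] [Module ℝ E]
    [TopologicalSpace E] [IsTopologicalAddGroup E] [ContinuousSMul ℝ E] (f : E →ᵃ[ℝ] ℝ)
    (hf : Continuous f) {y : E} (hy : f y ≠ 0) :
    connectedComponentIn {x | f x ≠ 0} y = {x | 0 < f x * f y} := by
  refine Set.Subset.antisymm (fun x hx => ?_) ?_
  · have hsub := (isPreconnected_iff_ordConnected.1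
      (isPreconnected_connectedComponentIn.image f hf.continuousOn)).uIcc_subset
      ⟨x, hx, rfl⟩ ⟨y, mem_connectedComponentIn (by exact hy), rfl⟩
    show 0 < f x * f y
    by_contra! hxy
    have h0 : (0 : ℝ) ∈ Set.uIcc (f x) (f y) := by
      rw [Set.mem_uIcc]
      rcases mul_nonpos_iff.1 hxy with h | h
      exacts [Or.inr ⟨h.2, h.1⟩, Or.inl h]
    obtain ⟨z, hz, hz0⟩ := hsub h0
    exact connectedComponentIn_subset _ _ hz hz0
  · refine IsPreconnected.subset_connectedComponentIn ?_ (by simpa [mul_self_pos] using hy)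
      (fun x hx => left_ne_zero_of_mul (ne_of_gt hx))
    exact ((convex_halfSpace_gt (LinearMap.mulRight ℝ (f y)).isLinear 0).affine_preimage
      f).isPreconnected

theorem Finset.sum_powersetCard_succ_of_mem {α β : Type*} [DecidableEq α] [AddCommMonoid β]
    {U : Finset α} {z : α} (hz : z ∈ U) (k : ℕ) (f : Finset α → β) :
    ∑ S ∈ U.powersetCard (k + 1), f S =
      ∑ S ∈ (U.erase z).powersetCard (k + 1), f S +
        ∑ T ∈ (U.erase z).powersetCard k, f (insert z T) := by
  conv_lhs => rw [← insert_erase hz]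
  rw [powersetCard_succ_insert (notMem_erase z U), sum_union, sum_image]
  · intro T hT T' hT' h
    exact insert_erase_invOn.2.injOn (notMem_mono (mem_powersetCard.1 hT).1 (notMem_erase z U))
      (notMem_mono (mem_powersetCard.1 hT').1 (notMem_erase z U)) h
  · refine disjoint_left.2 fun S hS hS' => ?_
    obtain ⟨T, -, rfl⟩ := mem_image.1 hS'
    exact notMem_mono (mem_powersetCard.1 hS).1 (notMem_erase z U) (mem_insert_self z T)

namespace Orchard

variable {d : ℕ}

def homogenize : (Fin d → ℝ) →ᵃ[ℝ] (Fin (d + 1) → ℝ) where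
  toFun x := Fin.cons 1 x
  linear := (Fin.consLinearEquiv ℝ fun _ => ℝ).toLinearMap ∘ₗ LinearMap.inr ℝ ℝ _
  map_vadd' x v := by
    ext i
    refine Fin.cases ?_ (fun j => ?_) i <;> simp

noncomputable def orient (q : Fin (d + 1) → Fin d → ℝ) : ℝ :=
  (Matrix.of fun i => homogenize (q i)).det

theorem orient_ne_zero_iff {q : Fin (d + 1) → Fin d → ℝ} :
    orient q ≠ 0 ↔ AffineIndependent ℝ q := by
  rw [orient, ← isUnit_iff_ne_zero, ← Matrix.isUnit_iff_isUnit_det,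
    ← Matrix.linearIndependent_rows_iff_isUnit, affineIndependent_iff_linearIndependent_prodMk_one,
    ← (Fin.consLinearEquiv ℝ fun _ => ℝ).toLinearMap.linearIndependent_iff (LinearEquiv.ker _)]
  rfl

theorem orient_comp_swap (q : Fin (d + 1) → Fin d → ℝ) {i j : Fin (d + 1)} (hij : i ≠ j) :
    orient (q ∘ Equiv.swap i j) = -orient q := by
  have h := Matrix.det_permute (Equiv.swap i j) (Matrix.of fun i => homogenize (q i))
  rw [Equiv.Perm.sign_swap hij, Units.val_neg, Units.val_one, Int.cast_neg, Int.cast_one,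
    neg_one_mul] at h
  exact h

-- `x ↦ orient (Fin.snoc p x)` as an affine map: the determinant is linear in the last row,
noncomputable def sideMap (p : Fin d → Fin d → ℝ) : (Fin d → ℝ) →ᵃ[ℝ] ℝ :=
  (Matrix.detRowAlternating.toMultilinearMap.toLinearMap
    (homogenize ∘ (Fin.snoc p 0 : Fin (d + 1) → Fin d → ℝ)) (Fin.last d)).toAffineMap.comp
      homogenize

theorem sideMap_apply (p : Fin d → Fin d → ℝ) (x : Fin d → ℝ) :
    sideMap p x = orient (Fin.snoc p x) := by
  simp only [sideMap, orient, AffineMap.coe_comp, Function.comp_apply, LinearMap.coe_toAffineMap,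
    MultilinearMap.toLinearMap_apply]
  rw [← Function.comp_update, Fin.update_snoc_last]
  rfl

theorem sideMap_eq_zero_iff {p : Fin d → Fin d → ℝ} (hp : AffineIndependent ℝ p)
    {x : Fin d → ℝ} : sideMap p x = 0 ↔ x ∈ affineSpan ℝ (Set.range p) := by
  rw [sideMap_apply, ← not_ne_iff, orient_ne_zero_iff, hp.snoc_iff, not_not]

theorem sideMap_snoc_apply_swap {k : ℕ} (t : Fin k → Fin (k + 1) → ℝ) (x y : Fin (k + 1) → ℝ) :
    sideMap (Fin.snoc t x) y = -sideMap (Fin.snoc t y) x := by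
  rw [sideMap_apply, sideMap_apply,
    ← orient_comp_swap _ (Fin.castSucc_lt_last (Fin.last k)).ne]
  congr 1
  funext i
  refine Fin.lastCases ?_ (fun j => Fin.lastCases ?_ (fun l => ?_) j) i
  · simp
  · simp
  · simp [Equiv.swap_apply_of_ne_of_ne]

theorem separates_iff_mul_neg {p : Fin d → Fin d → ℝ} (hp : AffineIndependent ℝ p)
    {S : Finset (Fin d → ℝ)} (hS : Set.range p = S) {X Y : Fin d → ℝ} :
    Separates S X Y ↔ sideMap p X * sideMap p Y < 0 := by
  have hspan : (affineSpan ℝ (S : Set (Fin d → ℝ)) : Set (Fin d → ℝ))ᶜ =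
      {x | sideMap p x ≠ 0} := by
    ext x
    simp [← hS, sideMap_eq_zero_iff hp]
  have hcomp {y} (hy : sideMap p y ≠ 0) := (sideMap p).connectedComponentIn_setOf_ne_zero
    (sideMap p).continuous_of_finiteDimensional hy
  simp only [Separates, ← Set.mem_compl_iff, hspan, Set.mem_ofPred_eq]
  constructor
  · rintro ⟨hX, hY, hXY⟩
    rw [hcomp hY] at hXY
    exact lt_of_le_of_ne (not_lt.1 hXY) (mul_ne_zero hX hY)
  · intro h
    have hY := right_ne_zero_of_mul h.ne
    refine ⟨left_ne_zero_of_mul h.ne, hY, ?_⟩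
    rw [hcomp hY]
    exact h.not_gt

theorem ite_mul_neg_add_add_eq_zero {x y z : ℝ} (hx : x ≠ 0) (hy : y ≠ 0) (hz : z ≠ 0) :
    ((if x * y < 0 then 1 else 0) + (if y * z < 0 then 1 else 0)
      + (if x * z < 0 then 1 else 0) : ZMod 2) = 0 := by
  rcases hx.lt_or_gt with hx | hx <;> rcases hy.lt_or_gt with hy | hy <;>
    rcases hz.lt_or_gt with hz | hz <;>
    simp [mul_neg_iff, hx, hy, hz, hx.not_gt, hy.not_gt, hz.not_gt] <;> decide

theorem ite_mul_pos_add_add_eq_one {x y z : ℝ} (hx : x ≠ 0) (hy : y ≠ 0) (hz : z ≠ 0) :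
    ((if 0 < y * x then 1 else 0) + (if 0 < z * y then 1 else 0)
      + (if 0 < z * x then 1 else 0) : ZMod 2) = 1 := by
  rcases hx.lt_or_gt with hx | hx <;> rcases hy.lt_or_gt with hy | hy <;>
    rcases hz.lt_or_gt with hz | hz <;>
    simp [mul_pos_iff, hx, hy, hz, hx.not_gt, hy.not_gt, hz.not_gt] <;> decide

end Orchard

namespace Generic

open Orchard

variable {d : ℕ} {P : Finset (Fin d → ℝ)}

theorem exists_affineIndependent_range_eq (hgen : Generic P) {S : Finset (Fin d → ℝ)}
    (hSP : S ⊆ P) {m : ℕ} (hS : #S = m) (hm : m ≤ d + 1) :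
    ∃ p : Fin m → Fin d → ℝ, AffineIndependent ℝ p ∧ Set.range p = S := by
  let e : S ≃ Fin m := Fintype.equivFinOfCardEq (by simpa using hS)
  refine ⟨Subtype.val ∘ e.symm, ?_, ?_⟩
  · exact (affineIndependent_equiv e.symm).2 (hgen S hSP (hS ▸ hm))
  · rw [Set.range_comp, e.symm.range_eq_univ, Set.image_univ, Subtype.range_coe]

theorem notMem_affineSpan (hgen : Generic P) {S : Finset (Fin d → ℝ)} (hSP : S ⊆ P)
    (hS : #S ≤ d) {X : Fin d → ℝ} (hX : X ∈ P) (hXS : X ∉ S) :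
    X ∉ affineSpan ℝ (S : Set (Fin d → ℝ)) := by
  have hind := hgen (insert X S) (insert_subset hX hSP) ((card_insert_le _ _).trans (by omega))
  have himage : Subtype.val '' {y : (insert X S : Finset _) | (y : Fin d → ℝ) ∈ S} = S := by
    ext z
    simpa using Or.inr
  simpa [himage, hXS] using
    hind.mem_affineSpan_iff ⟨X, mem_insert_self _ _⟩ {y | (y : Fin d → ℝ) ∈ S}

open scoped Classical

theorem separates_add_add_eq_zero (hgen : Generic P) {A B C : Fin d → ℝ}
    (hA : A ∈ P) (hB : B ∈ P) (hC : C ∈ P)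
    {S : Finset (Fin d → ℝ)} (hS : S ∈ (P \ {A, B, C}).powersetCard d) :
    ((if Separates S A B then 1 else 0) + (if Separates S B C then 1 else 0)
      + (if Separates S A C then 1 else 0) : ZMod 2) = 0 := by
  obtain ⟨hSsub, hScard⟩ := mem_powersetCard.1 hS
  have hSP : S ⊆ P := hSsub.trans sdiff_subset
  obtain ⟨p, hp, hpS⟩ := hgen.exists_affineIndependent_range_eq hSP hScard (by omega)
  have hside {X} (hX : X ∈ P) (hXS : X ∉ S) : sideMap p X ≠ 0 := by
    rw [Ne, sideMap_eq_zero_iff hp, hpS]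
    exact hgen.notMem_affineSpan hSP hScard.le hX hXS
  have hnot {X} (hX : X ∈ ({A, B, C} : Finset _)) : X ∉ S := fun h => by
    simpa [hX] using hSsub h
  simp only [separates_iff_mul_neg hp hpS]
  exact ite_mul_neg_add_add_eq_zero (hside hA (hnot (by simp))) (hside hB (hnot (by simp)))
    (hside hC (hnot (by simp)))

theorem separates_insert_add_add_eq_one {k : ℕ} {P : Finset (Fin (k + 1) → ℝ)}
    (hgen : Generic P) {A B C : Fin (k + 1) → ℝ} (hA : A ∈ P) (hB : B ∈ P) (hC : C ∈ P)
    (hAB : A ≠ B) (hBC : B ≠ C) (hAC : A ≠ C)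
    {T : Finset (Fin (k + 1) → ℝ)} (hT : T ∈ (P \ {A, B, C}).powersetCard k) :
    ((if Separates (insert C T) A B then 1 else 0) + (if Separates (insert A T) B C then 1 else 0)
      + (if Separates (insert B T) A C then 1 else 0) : ZMod 2) = 1 := by
  obtain ⟨hTsub, hTcard⟩ := mem_powersetCard.1 hT
  have hTP : T ⊆ P := hTsub.trans sdiff_subset
  obtain ⟨t, ht, htT⟩ := hgen.exists_affineIndependent_range_eq hTP hTcard (by omega)
  have hnot {X} (hX : X ∈ ({A, B, C} : Finset _)) : X ∉ T := fun h => by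
    simpa [hX] using hTsub h
  have hrange X : Set.range (Fin.snoc t X) = ↑(insert X T) := by simp [htT]
  have hind {X} (hX : X ∈ P) (hXT : X ∉ T) : AffineIndependent ℝ (Fin.snoc t X) :=
    ht.snoc_iff.2 (htT ▸ hgen.notMem_affineSpan hTP (by omega) hX hXT)
  have hsep {X Y Z} (hX : X ∈ P) (hXT : X ∉ T) :
      Separates (insert X T) Y Z ↔ sideMap (Fin.snoc t X) Y * sideMap (Fin.snoc t X) Z < 0 :=
    separates_iff_mul_neg (hind hX hXT) (hrange X)
  have hside {X Y} (hX : X ∈ P) (hXT : X ∉ T) (hY : Y ∈ P) (hYT : Y ∉ T) (hXY : Y ≠ X) :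
      sideMap (Fin.snoc t X) Y ≠ 0 := by
    rw [Ne, sideMap_eq_zero_iff (hind hX hXT), hrange]
    exact hgen.notMem_affineSpan (insert_subset hX hTP) ((card_insert_le _ _).trans (by omega))
      hY (by simp [hXY, hYT])
  have hAT := hnot (X := A) (by simp)
  have hBT := hnot (X := B) (by simp)
  have hCT := hnot (X := C) (by simp)
  rw [hsep hC hCT, hsep hA hAT, hsep hB hBT, sideMap_snoc_apply_swap t C B,
    sideMap_snoc_apply_swap t A C, sideMap_snoc_apply_swap t B A]
  simp only [mul_neg, neg_mul, neg_lt_zero]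
  exact ite_mul_pos_add_add_eq_one (hside hB hBT hC hCT hBC.symm) (hside hC hCT hA hAT hAC)
    (hside hA hAT hB hBT hAB.symm)

end Generic

theorem Separates.symm {d : ℕ} {S : Finset (Fin d → ℝ)} {A B : Fin d → ℝ}
    (h : Separates S A B) : Separates S B A := by
  obtain ⟨hA, hB, hAB⟩ := h
  refine ⟨hB, hA, fun hBA => hAB ?_⟩
  rw [← connectedComponentIn_eq hBA]
  exact mem_connectedComponentIn hA

section

open scoped Classical

theorem sepCount_comm {d : ℕ} (P : Finset (Fin d → ℝ)) (A B : Fin d → ℝ) :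
    sepCount P A B = sepCount P B A := by
  rw [sepCount, sepCount, pair_comm]
  exact congrArg card (filter_congr fun S _ => ⟨Separates.symm, Separates.symm⟩)

theorem natCast_sepCount_eq_sum_add_sum {k : ℕ} {P : Finset (Fin (k + 1) → ℝ)} {A B C : Fin (k + 1) → ℝ}
    (hC : C ∈ P) (hCA : C ≠ A) (hCB : C ≠ B) :
    (sepCount P A B : ZMod 2) =
      ∑ S ∈ (P \ {A, B, C}).powersetCard (k + 1), (if Separates S A B then 1 else 0) +
      ∑ T ∈ (P \ {A, B, C}).powersetCard k, (if Separates (insert C T) A B then 1 else 0) := by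
  have hU : (P \ {A, B}).erase C = P \ {A, B, C} := by
    ext X
    simp only [mem_erase, mem_sdiff, mem_insert, mem_singleton]
    tauto
  rw [sepCount, natCast_card_filter,
    sum_powersetCard_succ_of_mem (z := C) (by simp [hC, hCA, hCB]), hU]

theorem Generic.natCast_sepCount_add_add_eq_choose {k : ℕ} {P : Finset (Fin (k + 1) → ℝ)}
    (hgen : Generic P) {A B C : Fin (k + 1) → ℝ} (hA : A ∈ P) (hB : B ∈ P) (hC : C ∈ P)
    (hAB : A ≠ B) (hBC : B ≠ C) (hAC : A ≠ C) :
    (sepCount P A B + sepCount P B C + sepCount P A C : ZMod 2) = (#P - 3).choose k := by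
  have hBCA : P \ {B, C, A} = P \ {A, B, C} := by
    ext X; simp only [mem_sdiff, mem_insert, mem_singleton]; tauto
  have hACB : P \ {A, C, B} = P \ {A, B, C} := by
    ext X; simp only [mem_sdiff, mem_insert, mem_singleton]; tauto
  have hcard : #(P \ {A, B, C}) = #P - 3 := by
    rw [card_sdiff_of_subset (by simp [insert_subset_iff, hA, hB, hC]),
      card_insert_of_notMem (by simp [hAB, hAC]), card_pair hBC]
  have regroup (a₁ b₁ a₂ b₂ a₃ b₃ : ZMod 2) :
      a₁ + b₁ + (a₂ + b₂) + (a₃ + b₃) = a₁ + a₂ + a₃ + (b₁ + b₂ + b₃) := by ring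
  rw [natCast_sepCount_eq_sum_add_sum hC hAC.symm hBC.symm, natCast_sepCount_eq_sum_add_sum hA hAB hAC,
    natCast_sepCount_eq_sum_add_sum hB hAB.symm hBC, hBCA, hACB, regroup,
    ← sum_add_distrib, ← sum_add_distrib, ← sum_add_distrib, ← sum_add_distrib,
    sum_eq_zero fun S hS => hgen.separates_add_add_eq_zero hA hB hC hS,
    sum_congr rfl fun T hT => hgen.separates_insert_add_add_eq_one hA hB hC hAB hBC hAC hT]
  simp [hcard]

end

theorem orchardRel_iff_of_ne {k : ℕ} {P : Finset (Fin (k + 1) → ℝ)} {A B : Fin (k + 1) → ℝ}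
    (hAB : A ≠ B) : OrchardRel P A B ↔ (sepCount P A B : ZMod 2) = (#P - 3).choose k := by
  rw [OrchardRel, or_iff_right hAB, ZMod.natCast_eq_natCast_iff']
  rfl

/-- Orchard Theorem: for a generic configuration `P` of points in `ℝ^d`,
the Orchard relation is an equivalence relation on `P` with at most two classes. -/
theorem orchard_theorem {d : ℕ} (P : Finset (Fin d → ℝ)) (hgen : Generic P) :
    (∀ A ∈ P, OrchardRel P A A) ∧
    (∀ A ∈ P, ∀ B ∈ P, OrchardRel P A B → OrchardRel P B A) ∧
    (∀ A ∈ P, ∀ B ∈ P, ∀ C ∈ P,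
      OrchardRel P A B → OrchardRel P B C → OrchardRel P A C) ∧
    (∀ A ∈ P, ∀ B ∈ P, ∀ C ∈ P,
      OrchardRel P A B ∨ OrchardRel P B C ∨ OrchardRel P A C) := by
  rcases d with _ | k
  · have hall (A B : Fin 0 → ℝ) : OrchardRel P A B := Or.inl (Subsingleton.elim A B)
    exact ⟨fun A _ => hall A A, fun A _ B _ _ => hall B A, fun A _ _ _ C _ _ _ => hall A C,
      fun A _ B _ _ _ => Or.inl (hall A B)⟩
  have parity₁ : ∀ u v w c : ZMod 2, u + v + w = c → u = c → v = c → w = c := by decide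
  have parity₂ : ∀ u v w c : ZMod 2, u + v + w = c → u = c ∨ v = c ∨ w = c := by decide
  refine ⟨fun A _ => Or.inl rfl, fun A _ B _ => ?_, fun A hA B hB C hC => ?_,
    fun A hA B hB C hC => ?_⟩
  · rintro (rfl | h)
    exacts [Or.inl rfl, Or.inr (sepCount_comm P A B ▸ h)]
  · rcases eq_or_ne A B with rfl | hAB; · exact fun _ h => h
    rcases eq_or_ne B C with rfl | hBC; · exact fun h _ => h
    rcases eq_or_ne A C with rfl | hAC; · exact fun _ _ => Or.inl rfl
    rw [orchardRel_iff_of_ne hAB, orchardRel_iff_of_ne hBC, orchardRel_iff_of_ne hAC]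
    exact parity₁ _ _ _ _ (hgen.natCast_sepCount_add_add_eq_choose hA hB hC hAB hBC hAC)
  · rcases eq_or_ne A B with rfl | hAB; · exact Or.inl (Or.inl rfl)
    rcases eq_or_ne B C with rfl | hBC; · exact Or.inr (Or.inl (Or.inl rfl))
    rcases eq_or_ne A C with rfl | hAC; · exact Or.inr (Or.inr (Or.inl rfl))
    rw [orchardRel_iff_of_ne hAB, orchardRel_iff_of_ne hBC, orchardRel_iff_of_ne hAC]
    exact parity₂ _ _ _ _ (hgen.natCast_sepCount_add_add_eq_choose hA hB hC hAB hBC hAC)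
end

section
/- Let P be a generic configuration of n points in R^d and suppose P_i, P_j, P_k are three distinct points such that n(P_i,P_j) ≡ binom(n-3,d-1) (mod 2) and n(P_j,P_k) ≡ binom(n-3,d-1) (mod 2). Then n(P_i,P_k) ≡ binom(n-3,d-1) (mod 2). (Transitivity of the Orchard relation.) -/
open Finset

/-!
Put `Q = P \ {a, b, c}`. A hyperplane counted in `n(a,b)` is spanned either by `d` points of `Q`
or by `c` and `d - 1` points of `Q`, and similarly for `n(b,c)` and `n(a,c)`.

In homogeneous coordinates, the side of a point `x` of the hyperplane through `v₁, …, v_d` is the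
sign of `det(x, v₁, …, v_d)`. Hence a hyperplane spanned by `d` points of `Q` separates an even
number of the pairs `ab`, `bc`, `ac`: the three products of signs multiply to a square. For
`T ⊆ Q` with `d - 1` points, let `D(x, y) = det(y, x, T)`, which is antisymmetric. The
hyperplanes `T ∪ {c}`, `T ∪ {a}`, `T ∪ {b}` separate `ab`, `bc`, `ac` exactly when
`-D(c,a) D(b,c)`, `-D(a,b) D(c,a)`, `-D(a,b) D(b,c)` respectively are negative; their product is
`-(D(a,b) D(b,c) D(c,a))²`, so this happens an odd number of times. Summing over all hyperplanes,
`n(a,b) + n(b,c) + n(a,c) ≡ binom(n-3, d-1) (mod 2)`, which gives transitivity.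
-/

theorem Finset.exists_injective_fin_range_eq {α : Type*} (s : Finset α) {n : ℕ} (hs : #s = n) :
    ∃ v : Fin n → α, Function.Injective v ∧ Set.range v = s :=
  ⟨(↑) ∘ (s.equivFinOfCardEq hs).symm, Subtype.val_injective.comp (Equiv.injective _), by
    simp [Set.range_comp]⟩

theorem Finset.sdiff_pair_eq_insert_sdiff {α : Type*} [DecidableEq α] {P : Finset α} {a b c : α}
    (hc : c ∈ P) (hca : c ≠ a) (hcb : c ≠ b) : P \ {a, b} = insert c (P \ {a, b, c}) := by
  ext x
  by_cases hx : x = c <;> simp [*]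

theorem Finset.card_filter_powersetCard_succ_insert {α : Type*} [DecidableEq α] {Q : Finset α}
    {c : α} (hc : c ∉ Q) (n : ℕ) (p : Finset α → Prop) [DecidablePred p] :
    #{S ∈ (insert c Q).powersetCard (n + 1) | p S} =
      #{S ∈ Q.powersetCard (n + 1) | p S} + #{T ∈ Q.powersetCard n | p (insert c T)} := by
  rw [powersetCard_succ_insert hc, filter_union, card_union_of_disjoint]
  · rw [filter_image, card_image_of_injOn]
    intro T₁ h₁ T₂ h₂ h
    have hc₁ : c ∉ T₁ := fun h => hc ((mem_powersetCard.1 (mem_filter.1 h₁).1).1 h)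
    have hc₂ : c ∉ T₂ := fun h => hc ((mem_powersetCard.1 (mem_filter.1 h₂).1).1 h)
    rw [← erase_insert hc₁, ← erase_insert hc₂]
    exact congrArg (erase · c) h
  · refine disjoint_filter_filter (disjoint_left.2 fun S hS hS' => ?_)
    obtain ⟨T, -, rfl⟩ := mem_image.1 hS'
    exact hc ((mem_powersetCard.1 hS).1 (mem_insert_self c T))

theorem Finset.card_filter_add_card_filter_add_card_filter_mod {α : Type*} {s : Finset α}
    {p q r : α → Prop} [DecidablePred p] [DecidablePred q] [DecidablePred r] {m k : ℕ}
    (h : ∀ x ∈ s, ((if p x then 1 else 0) + (if q x then 1 else 0) +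
      (if r x then 1 else 0)) % m = k) :
    (#{x ∈ s | p x} + #{x ∈ s | q x} + #{x ∈ s | r x}) % m = #s * k % m := by
  simp only [card_filter, ← sum_add_distrib]
  rw [sum_nat_mod, sum_congr rfl h, sum_const, smul_eq_mul]

theorem AffineMap.connectedComponentIn_compl_setOf_eq_zero {E : Type*} [AddCommGroup E]
    [Module ℝ E] [TopologicalSpace E] [ContinuousAdd E] [ContinuousSMul ℝ E]
    {f : E →ᵃ[ℝ] ℝ} (hf : Continuous f) {b : E} (hb : f b ≠ 0) :
    connectedComponentIn {x | f x = 0}ᶜ b = {x | 0 < f x * f b} := by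
  have hcont : Continuous fun x => f x * f b := hf.mul continuous_const
  have hconv : Convex ℝ {x | 0 < f x * f b} := by
    have : {x | 0 < f x * f b} = (f b • f) ⁻¹' Set.Ioi 0 := by ext x; simp [mul_comm]
    exact this ▸ (convex_Ioi 0).affine_preimage (f b • f)
  apply subset_antisymm
  · refine isPreconnected_connectedComponentIn.subset_left_of_subset_union
      (isOpen_lt continuous_const hcont) (isOpen_lt hcont (continuous_const (y := 0))) ?_ ?_
      ⟨b, mem_connectedComponentIn hb, mul_self_pos.2 hb⟩
    · exact Set.disjoint_left.2 fun _ h₁ h₂ => lt_asymm (α := ℝ) h₁ h₂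
    · intro x hx
      have : f x ≠ 0 := connectedComponentIn_subset _ _ hx
      simpa [lt_or_lt_iff_ne, eq_comm] using mul_ne_zero this hb
  · exact hconv.isPreconnected.subset_connectedComponentIn (mul_self_pos.2 hb)
      fun x hx h => by simp_all

theorem mul_neg_count_mod_two_eq_zero {x y z : ℝ} (hx : x ≠ 0) (hy : y ≠ 0) (hz : z ≠ 0) :
    ((if x * y < 0 then 1 else 0) + (if y * z < 0 then 1 else 0) +
      (if x * z < 0 then 1 else 0)) % 2 = 0 := by
  rcases hx.lt_or_gt with hx | hx <;> rcases hy.lt_or_gt with hy | hy <;>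
    rcases hz.lt_or_gt with hz | hz <;>
    simp [mul_neg_iff, hx, hy, hz, hx.not_gt, hy.not_gt, hz.not_gt]

theorem mul_pos_count_mod_two_eq_one {x y z : ℝ} (hx : x ≠ 0) (hy : y ≠ 0) (hz : z ≠ 0) :
    ((if 0 < x * y then 1 else 0) + (if 0 < y * z then 1 else 0) +
      (if 0 < x * z then 1 else 0)) % 2 = 1 := by
  rcases hx.lt_or_gt with hx | hx <;> rcases hy.lt_or_gt with hy | hy <;>
    rcases hz.lt_or_gt with hz | hz <;>
    simp [mul_pos_iff, hx, hy, hz, hx.not_gt, hy.not_gt, hz.not_gt]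

section

variable {d : ℕ}

def homLift (d : ℕ) : (Fin d → ℝ) →ᵃ[ℝ] (Fin (d + 1) → ℝ) where
  toFun x := Matrix.vecCons 1 x
  linear := (Fin.consLinearEquiv ℝ fun _ => ℝ).toLinearMap ∘ₗ LinearMap.inr ℝ ℝ (Fin d → ℝ)
  map_vadd' x y := by ext i; refine Fin.cases ?_ (fun j => ?_) i <;> simp

theorem homLift_apply (x : Fin d → ℝ) : homLift d x = Matrix.vecCons 1 x := rfl

theorem sum_smul_homLift {ι : Type*} (s : Finset ι) (g : ι → ℝ) (w : ι → Fin d → ℝ) :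
    ∑ i ∈ s, g i • homLift d (w i) = Matrix.vecCons (∑ i ∈ s, g i) (∑ i ∈ s, g i • w i) := by
  ext j; refine Fin.cases ?_ (fun j => ?_) j <;> simp [homLift_apply, Finset.sum_apply]

theorem linearIndependent_homLift_comp_iff {ι : Type*} {w : ι → Fin d → ℝ} :
    LinearIndependent ℝ (homLift d ∘ w) ↔ AffineIndependent ℝ w := by
  simp only [linearIndependent_iff', affineIndependent_iff, Function.comp_apply, sum_smul_homLift,
    Matrix.cons_eq_zero_iff, and_imp]

theorem homLift_mem_span_iff {ι : Type*} [Fintype ι] {v : ι → Fin d → ℝ} {x : Fin d → ℝ} :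
    homLift d x ∈ Submodule.span ℝ (Set.range (homLift d ∘ v)) ↔
      x ∈ affineSpan ℝ (Set.range v) := by
  simp_rw [Submodule.mem_span_range_iff_exists_fun, Function.comp_apply, sum_smul_homLift,
    homLift_apply, Matrix.vecCons_inj]
  constructor
  · rintro ⟨g, hg, rfl⟩
    simpa [Finset.affineCombination_eq_linear_combination _ _ _ hg] using
      affineCombination_mem_affineSpan hg v
  · intro hx
    obtain ⟨g, hg, rfl⟩ := eq_affineCombination_of_mem_affineSpan_of_fintype hx
    exact ⟨g, hg, (Finset.affineCombination_eq_linear_combination _ _ _ hg).symm⟩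

noncomputable def homDet (w : Fin (d + 1) → Fin d → ℝ) : ℝ :=
  Matrix.det (Matrix.of fun i => homLift d (w i))

theorem homDet_ne_zero_iff_linearIndependent {w : Fin (d + 1) → Fin d → ℝ} :
    homDet w ≠ 0 ↔ LinearIndependent ℝ (homLift d ∘ w) := by
  rw [homDet, ← isUnit_iff_ne_zero, ← Matrix.isUnit_iff_isUnit_det,
    ← Matrix.linearIndependent_rows_iff_isUnit]
  rfl

theorem homDet_ne_zero_iff {w : Fin (d + 1) → Fin d → ℝ} :
    homDet w ≠ 0 ↔ AffineIndependent ℝ w :=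
  homDet_ne_zero_iff_linearIndependent.trans linearIndependent_homLift_comp_iff

theorem homDet_cons_eq_zero_iff {v : Fin d → Fin d → ℝ} (hv : AffineIndependent ℝ v)
    {x : Fin d → ℝ} : homDet (Fin.cons x v) = 0 ↔ x ∈ affineSpan ℝ (Set.range v) := by
  rw [← not_iff_not, ← Ne, homDet_ne_zero_iff_linearIndependent, Fin.comp_cons,
    linearIndependent_finCons, homLift_mem_span_iff, linearIndependent_homLift_comp_iff]
  simp [hv]

theorem homDet_cons_cons {n : ℕ} (u : Fin n → Fin (n + 1) → ℝ) (x y : Fin (n + 1) → ℝ) :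
    homDet (Fin.cons y (Fin.cons x u)) = -homDet (Fin.cons x (Fin.cons y u)) := by
  have hswap : (Fin.cons y (Fin.cons x u) : Fin (n + 2) → _) =
      Fin.cons x (Fin.cons y u) ∘ Equiv.swap 0 1 := by
    ext i : 1
    refine Fin.cases ?_ (Fin.cases ?_ fun j => ?_) i
    · simp
    · simp
    · rw [Function.comp_apply, Equiv.swap_apply_of_ne_of_ne (Fin.succ_ne_zero _)
        (by simp [Fin.ext_iff])]
      simp
  rw [homDet, homDet, hswap]
  exact (Matrix.detRowAlternating (n := Fin (n + 2)) (R := ℝ)).map_swap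
    (homLift (n + 1) ∘ (Fin.cons x (Fin.cons y u) : Fin (n + 2) → Fin (n + 1) → ℝ)) zero_ne_one

noncomputable def homDetAffine (v : Fin d → Fin d → ℝ) : (Fin d → ℝ) →ᵃ[ℝ] ℝ :=
  ((Matrix.detRowAlternating (n := Fin (d + 1)) (R := ℝ)).toMultilinearMap.toLinearMap
    (Fin.cons 0 (homLift d ∘ v)) 0).toAffineMap.comp (homLift d)

theorem homDetAffine_apply (v : Fin d → Fin d → ℝ) (x : Fin d → ℝ) :
    homDetAffine v x = homDet (Fin.cons x v) := by
  show Matrix.detRowAlternating (Function.update (Fin.cons 0 (homLift d ∘ v)) 0 (homLift d x)) = _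
  rw [Fin.update_cons_zero, ← Fin.comp_cons]
  rfl

theorem separates_iff_homDet_mul_neg {S : Finset (Fin d → ℝ)} {v : Fin d → Fin d → ℝ}
    (hv : AffineIndependent ℝ v) (hvS : Set.range v = S) (A B : Fin d → ℝ) :
    Separates S A B ↔ homDet (Fin.cons A v) * homDet (Fin.cons B v) < 0 := by
  have hspan : (affineSpan ℝ (S : Set (Fin d → ℝ)) : Set (Fin d → ℝ)) =
      {x | homDetAffine v x = 0} := by
    ext x
    simp [← hvS, homDetAffine_apply, homDet_cons_eq_zero_iff hv]
  rw [Separates, hspan]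
  by_cases hB : homDetAffine v B = 0
  · simp_all [homDetAffine_apply]
  · rw [(homDetAffine v).connectedComponentIn_compl_setOf_eq_zero
      (homDetAffine v).continuous_of_finiteDimensional hB]
    simp only [Set.mem_ofPred_eq, homDetAffine_apply, not_lt] at hB ⊢
    constructor
    · rintro ⟨hA, -, hAB⟩
      exact lt_of_le_of_ne hAB (mul_ne_zero hA hB)
    · intro h
      exact ⟨fun hA => by simp [hA] at h, hB, h.le⟩

theorem Generic.affineIndependent {P : Finset (Fin d → ℝ)} (hP : Generic P) {m : ℕ}
    {w : Fin m → Fin d → ℝ} (hw : Function.Injective w) (hwP : Set.range w ⊆ P)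
    (hm : m ≤ d + 1) : AffineIndependent ℝ w := by
  refine AffineIndependent.of_set_of_injective ?_ hw
  have hrange : Set.range w = ↑(univ.image w) := by simp
  rw [hrange] at hwP ⊢
  exact hP _ (by exact_mod_cast hwP) (by rwa [card_image_of_injective _ hw, card_univ,
    Fintype.card_fin])

theorem Generic.homDet_cons_ne_zero {P : Finset (Fin d → ℝ)} (hP : Generic P)
    {v : Fin d → Fin d → ℝ} (hv : Function.Injective v) (hvP : Set.range v ⊆ P)
    {x : Fin d → ℝ} (hx : x ∈ P) (hxv : x ∉ Set.range v) : homDet (Fin.cons x v) ≠ 0 :=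
  homDet_ne_zero_iff.2 <| hP.affineIndependent (Fin.cons_injective_iff.2 ⟨hxv, hv⟩)
    (by simpa [Fin.range_cons, Set.insert_subset_iff] using ⟨hx, hvP⟩) le_rfl

open Classical

theorem Generic.separates_count_mod_two_eq_zero {P S : Finset (Fin d → ℝ)} (hP : Generic P)
    (hSP : S ⊆ P) (hS : #S = d) {a b c : Fin d → ℝ} (ha : a ∈ P \ S) (hb : b ∈ P \ S)
    (hc : c ∈ P \ S) :
    ((if Separates S a b then 1 else 0) + (if Separates S b c then 1 else 0) +
      (if Separates S a c then 1 else 0)) % 2 = 0 := by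
  obtain ⟨v, hv, hvS⟩ := S.exists_injective_fin_range_eq hS
  have hvP : Set.range v ⊆ P := hvS ▸ by exact_mod_cast hSP
  have hne : ∀ x ∈ P \ S, homDet (Fin.cons x v) ≠ 0 := fun x hx =>
    hP.homDet_cons_ne_zero hv hvP (mem_sdiff.1 hx).1 (by simpa [hvS] using (mem_sdiff.1 hx).2)
  simp only [separates_iff_homDet_mul_neg (hP.affineIndependent hv hvP d.le_succ) hvS]
  exact mul_neg_count_mod_two_eq_zero (hne a ha) (hne b hb) (hne c hc)

theorem Generic.separates_insert_count_mod_two_eq_one {e : ℕ} {P T : Finset (Fin (e + 1) → ℝ)}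
    (hP : Generic P) (hTP : T ⊆ P) (hT : #T = e) {a b c : Fin (e + 1) → ℝ} (ha : a ∈ P \ T)
    (hb : b ∈ P \ T) (hc : c ∈ P \ T) (hab : a ≠ b) (hbc : b ≠ c) (hac : a ≠ c) :
    ((if Separates (insert c T) a b then 1 else 0) + (if Separates (insert a T) b c then 1 else 0) +
      (if Separates (insert b T) a c then 1 else 0)) % 2 = 1 := by
  obtain ⟨u, hu, huT⟩ := T.exists_injective_fin_range_eq hT
  have hrange : ∀ x, Set.range (Fin.cons x u) = ↑(insert x T) := by
    simp [Fin.range_cons, huT]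
  have hinj : ∀ x ∈ P \ T, Function.Injective (Fin.cons x u) := fun x hx =>
    Fin.cons_injective_iff.2 ⟨by simpa [huT] using (mem_sdiff.1 hx).2, hu⟩
  have hsub : ∀ x ∈ P \ T, Set.range (Fin.cons x u) ⊆ P := fun x hx => by
    rw [hrange]; exact_mod_cast insert_subset (mem_sdiff.1 hx).1 hTP
  have hsep : ∀ x ∈ P \ T, ∀ y z, Separates (insert x T) y z ↔
      homDet (Fin.cons y (Fin.cons x u)) * homDet (Fin.cons z (Fin.cons x u)) < 0 :=
    fun x hx => separates_iff_homDet_mul_neg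
      (hP.affineIndependent (hinj x hx) (hsub x hx) (e + 1).le_succ) (hrange x)
  have hne : ∀ x ∈ P \ T, ∀ y ∈ P \ T, x ≠ y → homDet (Fin.cons y (Fin.cons x u)) ≠ 0 :=
    fun x hx y hy hxy => hP.homDet_cons_ne_zero (hinj x hx) (hsub x hx) (mem_sdiff.1 hy).1 (by
      simp [hrange, (mem_sdiff.1 hy).2, Ne.symm hxy])
  rw [hsep c hc, hsep a ha, hsep b hb, homDet_cons_cons u c b, homDet_cons_cons u a c,
    homDet_cons_cons u b a]
  simpa [mul_comm] using mul_pos_count_mod_two_eq_one (hne b hb c hc hbc) (hne c hc a ha hac.symm)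
    (hne a ha b hb hab)

theorem sepCount_eq_add {e : ℕ} {P Q : Finset (Fin (e + 1) → ℝ)} {a b c : Fin (e + 1) → ℝ}
    (hQ : P \ {a, b} = insert c Q) (hc : c ∉ Q) :
    sepCount P a b = #{S ∈ Q.powersetCard (e + 1) | Separates S a b} +
      #{T ∈ Q.powersetCard e | Separates (insert c T) a b} := by
  rw [sepCount, hQ]
  exact card_filter_powersetCard_succ_insert hc _ _

theorem Generic.sepCount_add_sepCount_add_sepCount_mod_two {P : Finset (Fin d → ℝ)}
    (hP : Generic P) {a b c : Fin d → ℝ} (ha : a ∈ P) (hb : b ∈ P) (hc : c ∈ P)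
    (hab : a ≠ b) (hbc : b ≠ c) (hac : a ≠ c) :
    (sepCount P a b + sepCount P b c + sepCount P a c) % 2 = (#P - 3).choose (d - 1) % 2 := by
  obtain _ | e := d
  · exact absurd (Subsingleton.elim a b) hab
  set Q := P \ {a, b, c}
  have hQ : #Q = #P - 3 := by
    rw [card_sdiff_of_subset (by simp [insert_subset_iff, *]),
      card_eq_three.2 ⟨a, b, c, hab, hac, hbc, rfl⟩]
  have hQab : P \ {a, b} = insert c Q := sdiff_pair_eq_insert_sdiff hc hac.symm hbc.symm
  have hQbc : P \ {b, c} = insert a Q := by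
    rw [sdiff_pair_eq_insert_sdiff ha hab hac, pair_comm c a, insert_comm b a]
  have hQac : P \ {a, c} = insert b Q := by
    rw [sdiff_pair_eq_insert_sdiff hb hab.symm hbc, pair_comm c b]
  rw [sepCount_eq_add hQab (by simp [Q]), sepCount_eq_add hQbc (by simp [Q]),
    sepCount_eq_add hQac (by simp [Q])]
  have hout : ∀ {R}, R ⊆ Q → a ∈ P \ R ∧ b ∈ P \ R ∧ c ∈ P \ R := fun hR =>
    ⟨mem_sdiff.2 ⟨ha, fun h => by simpa [Q] using hR h⟩,
      mem_sdiff.2 ⟨hb, fun h => by simpa [Q] using hR h⟩,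
      mem_sdiff.2 ⟨hc, fun h => by simpa [Q] using hR h⟩⟩
  have hS := card_filter_add_card_filter_add_card_filter_mod (m := 2)
    fun S (hS : S ∈ Q.powersetCard (e + 1)) => by
      obtain ⟨hSQ, hcard⟩ := mem_powersetCard.1 hS
      obtain ⟨haS, hbS, hcS⟩ := hout hSQ
      exact hP.separates_count_mod_two_eq_zero (hSQ.trans sdiff_subset) hcard haS hbS hcS
  have hT := card_filter_add_card_filter_add_card_filter_mod (m := 2)
    fun T (hT : T ∈ Q.powersetCard e) => by
      obtain ⟨hTQ, hcard⟩ := mem_powersetCard.1 hT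
      obtain ⟨haT, hbT, hcT⟩ := hout hTQ
      exact hP.separates_insert_count_mod_two_eq_one (hTQ.trans sdiff_subset) hcard haT hbT hcT
        hab hbc hac
  rw [card_powersetCard, hQ] at hT
  simp only [mul_zero, mul_one, Nat.zero_mod, Nat.add_sub_cancel] at hS hT ⊢
  omega

end

/-- transitivity of the Orchard relation. If `n(Pᵢ,Pⱼ)` and `n(Pⱼ,Pₖ)` are both
congruent to `binom (n-3) (d-1)` mod 2, then so is `n(Pᵢ,Pₖ)`. -/
theorem orchard_transitive {d : ℕ} (P : Finset (Fin d → ℝ)) (hgen : Generic P)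
    (Pi Pj Pk : Fin d → ℝ) (hi : Pi ∈ P) (hj : Pj ∈ P) (hk : Pk ∈ P)
    (hij : Pi ≠ Pj) (hjk : Pj ≠ Pk) (hik : Pi ≠ Pk)
    (h1 : sepCount P Pi Pj % 2 = Nat.choose (P.card - 3) (d - 1) % 2)
    (h2 : sepCount P Pj Pk % 2 = Nat.choose (P.card - 3) (d - 1) % 2) :
    sepCount P Pi Pk % 2 = Nat.choose (P.card - 3) (d - 1) % 2 := by
  have := hgen.sepCount_add_sepCount_add_sepCount_mod_two hi hj hk hij hjk hik
  omega
end

section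
/- Flip Proposition, part (i): Let P(-1) and P(+1) be two generic configurations of n points in R^d related by a flip with flipset F(t) of d+1 points. If two distinct points P(t), Q(t) are either both in F(t) or both in the complement P(t)\F(t), then n(P(1),Q(1)) = n(P(-1),Q(-1)); in particular P(-1) ∼ Q(-1) if and only if P(+1) ∼ Q(+1) for the Orchard relation. -/
open Finset

/-- A labelled tuple of points of `ℝ^d` is generic if every subset of at most `d+1` of the
points is affinely independent. -/
def GenericTuple {d n : ℕ} (P : Fin n → (Fin d → ℝ)) : Prop :=
  ∀ S : Finset (Fin n), S.card ≤ d + 1 → AffineIndependent ℝ (fun i : S => P (i : Fin n))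

/-- A flip: a continuous path `t ↦ P t` of `n`-tuples of points of `ℝ^d`, `t ∈ [-1,1]`,
generic for `t ≠ 0`, such that at `t = 0` exactly one set `F` of `d+1` points is affinely
dependent (lying in a common hyperplane spanned by any `d` of them), and the orientation of
the simplex on the flipset reverses between `t = -1` and `t = 1`. -/
structure IsFlip (d n : ℕ) (P : ℝ → Fin n → (Fin d → ℝ)) (F : Finset (Fin n)) : Prop where
  cont : ∀ i, ContinuousOn (fun t => P t i) (Set.Icc (-1 : ℝ) 1)
  cardF : F.card = d + 1
  generic : ∀ t ∈ Set.Icc (-1 : ℝ) 1, t ≠ 0 → GenericTuple (P t)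
  degen : ¬ AffineIndependent ℝ (fun i : F => P 0 (i : Fin n))
  small_indep : ∀ S : Finset (Fin n), S.card ≤ d →
    AffineIndependent ℝ (fun i : S => P 0 (i : Fin n))
  flipset_unique : ∀ G : Finset (Fin n), G.card = d + 1 → G ≠ F →
    AffineIndependent ℝ (fun i : G => P 0 (i : Fin n))
  reversal : ∀ e : Fin (d + 1) → Fin n, Function.Injective e → (∀ r, e r ∈ F) →
    Matrix.det (Matrix.of fun r c : Fin d => (P (-1) (e r.succ) - P (-1) (e 0)) c) *
      Matrix.det (Matrix.of fun r c : Fin d => (P 1 (e r.succ) - P 1 (e 0)) c) < 0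

/-!
For a `d`-set `T` of indices other than `p, q`, the hyperplane spanned by `T` separates `p`
from `q` iff the two simplex determinants `det(T, p)` and `det(T, q)` have opposite signs: the
determinant with apex `x` is an affine function of `x` vanishing exactly on the hyperplane, so
the components of the hyperplane's complement are its two open half-spaces. Since `p` and `q`
are both in or both outside the flipset, neither `T ∪ {p}` nor `T ∪ {q}` is the flipset, so
both simplices stay nondegenerate along the whole path and the sign of the product of the
determinants cannot change between `t = -1` and `t = 1`. Hence the same hyperplanes separate
before and after the flip, and the Orchard relation, which only depends on `n(P, Q)` and on
the number of points, is unchanged too.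
-/

open Function

noncomputable def simplexDet {d : ℕ} (u : Fin (d + 1) → (Fin d → ℝ)) : ℝ :=
  Matrix.det (Matrix.of fun r c : Fin d => (u r.succ - u 0) c)

theorem affineIndependent_iff_simplexDet_ne_zero {d : ℕ} (u : Fin (d + 1) → (Fin d → ℝ)) :
    AffineIndependent ℝ u ↔ simplexDet u ≠ 0 := by
  rw [affineIndependent_iff_linearIndependent_vsub ℝ u 0,
    ← linearIndependent_equiv (finSuccAboveEquiv 0), simplexDet, ← isUnit_iff_ne_zero,
    ← Matrix.isUnit_iff_isUnit_det, ← Matrix.linearIndependent_rows_iff_isUnit]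
  rfl

theorem AffineIndependent.affineIndependent_snoc_iff {k V P : Type*} [DivisionRing k]
    [AddCommGroup V] [Module k V] [AddTorsor V P] {m : ℕ} {s : Fin m → P}
    (hs : AffineIndependent k s) (x : P) :
    AffineIndependent k (Fin.snoc s x : Fin (m + 1) → P) ↔ x ∉ affineSpan k (Set.range s) := by
  have hrange : (Fin.snoc s x : Fin (m + 1) → P) '' {Fin.last m}ᶜ = Set.range s := by
    ext y
    constructor
    · rintro ⟨i, hi, rfl⟩
      obtain ⟨j, rfl⟩ := Fin.exists_castSucc_eq.2 hi
      simp
    · rintro ⟨j, rfl⟩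
      exact ⟨j.castSucc, Fin.castSucc_ne_last j, by simp⟩
  constructor
  · intro h
    simpa [Set.compl_eq_univ_sdiff, ← hrange] using
      h.notMem_affineSpan_sdiff (Fin.last m) Set.univ
  · intro hx
    refine AffineIndependent.affineIndependent_of_notMem_span (k := k) (p := Fin.snoc s x)
      (i := Fin.last m) ?_ ?_
    · rw [← affineIndependent_equiv (finSuccAboveEquiv (Fin.last m))]
      simpa [Function.comp_def, finSuccAboveEquiv_apply] using hs
    · simpa [← Set.compl_ofPred, hrange] using hx

theorem simplexDet_snoc {m : ℕ} (s : Fin (m + 1) → (Fin (m + 1) → ℝ)) (x : Fin (m + 1) → ℝ) :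
    simplexDet (Fin.snoc s x : Fin (m + 2) → _) =
      ((Matrix.of fun r => (Fin.snoc s (s 0) : Fin (m + 2) → _) r.succ - s 0).updateRow
        (Fin.last m) (x - s 0)).det := by
  unfold simplexDet
  congr 1
  ext r c
  induction r using Fin.lastCases with
  | last => simp [Matrix.updateRow_self]
  | cast i =>
    rw [Matrix.updateRow_ne (Fin.castSucc_ne_last i)]
    simp [Fin.succ_castSucc, -Fin.castSucc_succ]

-- Only the last row `x - s 0` of the matrix depends on the apex `x`, so this is affine in `x`.
noncomputable def simplexDetSnoc {m : ℕ} (s : Fin (m + 1) → (Fin (m + 1) → ℝ)) :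
    (Fin (m + 1) → ℝ) →ᵃ[ℝ] ℝ where
  toFun x := simplexDet (Fin.snoc s x : Fin (m + 2) → _)
  linear := Matrix.detRowAlternating.toMultilinearMap.toLinearMap
    (Matrix.of fun r => (Fin.snoc s (s 0) : Fin (m + 2) → _) r.succ - s 0) (Fin.last m)
  map_vadd' x v := by
    simp only [simplexDet_snoc s, vadd_eq_add, add_sub_assoc, Matrix.det_updateRow_add]
    rfl

theorem simplexDetSnoc_apply {m : ℕ} (s : Fin (m + 1) → (Fin (m + 1) → ℝ))
    (x : Fin (m + 1) → ℝ) :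
    simplexDetSnoc s x = simplexDet (Fin.snoc s x : Fin (m + 2) → _) := rfl

theorem simplexDetSnoc_eq_zero_iff {m : ℕ} {s : Fin (m + 1) → (Fin (m + 1) → ℝ)}
    (hs : AffineIndependent ℝ s) (x : Fin (m + 1) → ℝ) :
    simplexDetSnoc s x = 0 ↔ x ∈ affineSpan ℝ (Set.range s) := by
  rw [simplexDetSnoc_apply, ← not_not (a := _ = _), ← ne_eq,
    ← affineIndependent_iff_simplexDet_ne_zero, hs.affineIndependent_snoc_iff, not_not]

theorem IsPreconnected.neg_iff_neg_of_ne_zero {α : Type*} [TopologicalSpace α] {S : Set α}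
    (hS : IsPreconnected S) {f : α → ℝ} (hf : ContinuousOn f S) (hf0 : ∀ x ∈ S, f x ≠ 0)
    {a b : α} (ha : a ∈ S) (hb : b ∈ S) : f a < 0 ↔ f b < 0 := by
  suffices key : ∀ a ∈ S, ∀ b ∈ S, f a < 0 → f b < 0 from ⟨key a ha b hb, key b hb a ha⟩
  intro a ha b hb hfa
  by_contra! hfb
  obtain ⟨x, hxS, hx⟩ := hS.intermediate_value ha hb hf ⟨hfa.le, hfb⟩
  exact hf0 x hxS hx

theorem AffineMap.mem_connectedComponentIn_iff_mul_pos {E : Type*} [AddCommGroup E]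
    [Module ℝ E] [TopologicalSpace E] [IsTopologicalAddGroup E] [ContinuousSMul ℝ E] (f : E →ᵃ[ℝ] ℝ)
    (hf : Continuous f) {a b : E} (hb : f b ≠ 0) :
    a ∈ connectedComponentIn {x | f x ≠ 0} b ↔ 0 < f a * f b := by
  constructor
  · intro ha
    have hcomp := connectedComponentIn_subset {x | f x ≠ 0} b
    have hsign := isPreconnected_connectedComponentIn.neg_iff_neg_of_ne_zero hf.continuousOn
      (fun x hx => hcomp hx) ha (mem_connectedComponentIn hb)
    rcases (hcomp ha).lt_or_gt with hfa | hfa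
    · exact mul_pos_of_neg_of_neg hfa (hsign.1 hfa)
    · exact mul_pos hfa ((hb.lt_or_gt).resolve_left fun h => hfa.not_gt (hsign.2 h))
  · intro hab
    have hconv : Convex ℝ {x | 0 < f x * f b} :=
      (convex_halfSpace_gt (IsLinearMap.isLinearMap_smul' (f b)) 0).affine_preimage f
    exact (hconv.isPreconnected.subset_connectedComponentIn (mul_self_pos.2 hb)
      (fun x hx => left_ne_zero_of_mul hx.ne') hab)

theorem separates_iff_simplexDet_mul_neg {m : ℕ} {s : Fin (m + 1) → (Fin (m + 1) → ℝ)}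
    (hs : AffineIndependent ℝ s) {S : Finset (Fin (m + 1) → ℝ)}
    (hS : (S : Set (Fin (m + 1) → ℝ)) = Set.range s) (A B : Fin (m + 1) → ℝ) :
    Separates S A B ↔
      simplexDet (Fin.snoc s A : Fin (m + 2) → _) *
        simplexDet (Fin.snoc s B : Fin (m + 2) → _) < 0 := by
  have hspan : (affineSpan ℝ (S : Set (Fin (m + 1) → ℝ)) : Set (Fin (m + 1) → ℝ)) =
      {x | simplexDetSnoc s x = 0} := by
    ext x
    rw [hS]
    exact (simplexDetSnoc_eq_zero_iff hs x).symm
  have hcomp := (simplexDetSnoc s).mem_connectedComponentIn_iff_mul_pos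
    (AffineMap.continuous_of_finiteDimensional _) (a := A) (b := B)
  simp only [Separates, hspan, simplexDetSnoc_apply] at hcomp ⊢
  constructor
  · rintro ⟨hA, hB, hAB⟩
    exact lt_of_le_of_ne (not_lt.1 fun h => hAB ((hcomp hB).2 h)) (mul_ne_zero hA hB)
  · intro h
    refine ⟨left_ne_zero_of_mul h.ne, right_ne_zero_of_mul h.ne, fun hAB => ?_⟩
    exact (hcomp (right_ne_zero_of_mul h.ne)).1 hAB |>.not_gt h

open Classical in
theorem sepCount_image {ι : Type*} [Fintype ι] [DecidableEq ι] {d : ℕ} {P : ι → (Fin d → ℝ)}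
    (hP : Injective P) (p q : ι) :
    sepCount (univ.image P) (P p) (P q) =
      #{T ∈ (univ \ {p, q}).powersetCard d | Separates (T.image P) (P p) (P q)} := by
  have hdiff : univ.image P \ {P p, P q} = (univ \ {p, q}).map ⟨P, hP⟩ := by
    rw [map_eq_image, Embedding.coeFn_mk, image_sdiff _ _ hP, image_insert, image_singleton]
  rw [sepCount, hdiff, powersetCard_map, filter_map, card_map]
  simp [map_eq_image]

theorem GenericTuple.injective {d n : ℕ} {P : Fin n → (Fin d → ℝ)} (hP : GenericTuple P)
    (hd : d ≠ 0) : Injective P := by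
  intro i j hij
  by_contra hne
  have hind := hP {i, j} ((card_le_two).trans (by omega))
  exact hne (congrArg Subtype.val (hind.injective (a₁ := ⟨i, by simp⟩) (a₂ := ⟨j, by simp⟩) hij))

theorem AffineIndependent.comp_of_forall_mem {k V P ι ι' : Type*} [Ring k] [AddCommGroup V]
    [Module k V] [AddTorsor V P] {Q : ι → P} {G : Finset ι}
    (hG : AffineIndependent k fun i : G => Q i) {w : ι' → ι} (hw : Injective w)
    (hwG : ∀ r, w r ∈ G) : AffineIndependent k (Q ∘ w) :=
  hG.comp_embedding ((⟨w, hw⟩ : ι' ↪ ι).codRestrict (G : Set ι) hwG)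

theorem GenericTuple.separates_image_iff {m n : ℕ} {Q : Fin n → (Fin (m + 1) → ℝ)}
    (hQ : GenericTuple Q) {T : Finset (Fin n)} (hT : T.card = m + 1) (p q : Fin n) :
    Separates (T.image Q) (Q p) (Q q) ↔
      simplexDet (Q ∘ Fin.snoc (T.orderEmbOfFin hT) p) *
        simplexDet (Q ∘ Fin.snoc (T.orderEmbOfFin hT) q) < 0 := by
  have hs : AffineIndependent ℝ (Q ∘ T.orderEmbOfFin hT) :=
    (hQ T (by omega)).comp_of_forall_mem (T.orderEmbOfFin hT).injective
      (T.orderEmbOfFin_mem hT)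
  rw [separates_iff_simplexDet_mul_neg hs
    (by rw [coe_image, Set.range_comp, range_orderEmbOfFin]), Fin.comp_snoc, Fin.comp_snoc]

namespace IsFlip

variable {d n : ℕ} {P : ℝ → Fin n → (Fin d → ℝ)} {F : Finset (Fin n)}

theorem dim_ne_zero (hflip : IsFlip d n P F) : d ≠ 0 := by
  rintro rfl
  have := hflip.reversal (F.orderEmbOfFin hflip.cardF) (F.orderEmbOfFin hflip.cardF).injective
    (F.orderEmbOfFin_mem hflip.cardF)
  norm_num [Matrix.det_isEmpty] at this

theorem injective (hflip : IsFlip d n P F) {t : ℝ} (ht : t ∈ Set.Icc (-1 : ℝ) 1)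
    (ht0 : t ≠ 0) : Injective (P t) :=
  (hflip.generic t ht ht0).injective hflip.dim_ne_zero

theorem affineIndependent_comp (hflip : IsFlip d n P F) {w : Fin (d + 1) → Fin n}
    (hw : Injective w) (hwF : univ.image w ≠ F) {t : ℝ} (ht : t ∈ Set.Icc (-1 : ℝ) 1) :
    AffineIndependent ℝ (P t ∘ w) := by
  have hcard : (univ.image w).card = d + 1 := by simp [card_image_of_injective _ hw]
  have hG : AffineIndependent ℝ fun i : univ.image w => P t i := by
    rcases eq_or_ne t 0 with rfl | ht0
    · exact hflip.flipset_unique _ hcard hwF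
    · exact hflip.generic t ht ht0 _ hcard.le
  exact hG.comp_of_forall_mem hw fun r => mem_image_of_mem w (mem_univ r)

theorem continuousOn_simplexDet (hflip : IsFlip d n P F) (w : Fin (d + 1) → Fin n) :
    ContinuousOn (fun t => simplexDet (P t ∘ w)) (Set.Icc (-1 : ℝ) 1) := by
  have := hflip.cont
  unfold simplexDet
  fun_prop

theorem simplexDet_mul_neg_iff (hflip : IsFlip d n P F) {w w' : Fin (d + 1) → Fin n}
    (hw : Injective w) (hw' : Injective w') (hwF : univ.image w ≠ F)
    (hw'F : univ.image w' ≠ F) :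
    simplexDet (P (-1) ∘ w) * simplexDet (P (-1) ∘ w') < 0 ↔
      simplexDet (P 1 ∘ w) * simplexDet (P 1 ∘ w') < 0 :=
  isPreconnected_Icc.neg_iff_neg_of_ne_zero
    ((hflip.continuousOn_simplexDet w).mul (hflip.continuousOn_simplexDet w'))
    (fun _ ht => mul_ne_zero
      ((affineIndependent_iff_simplexDet_ne_zero _).1 (hflip.affineIndependent_comp hw hwF ht))
      ((affineIndependent_iff_simplexDet_ne_zero _).1 (hflip.affineIndependent_comp hw' hw'F ht)))
    (by norm_num) (by norm_num)

end IsFlip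

theorem IsFlip.separates_iff {m n : ℕ} {P : ℝ → Fin n → (Fin (m + 1) → ℝ)} {F : Finset (Fin n)}
    (hflip : IsFlip (m + 1) n P F) {p q : Fin n} (hpq : p ≠ q) (hF : p ∈ F ↔ q ∈ F)
    {T : Finset (Fin n)} (hT : T ∈ (univ \ {p, q}).powersetCard (m + 1)) :
    Separates (T.image (P (-1))) (P (-1) p) (P (-1) q) ↔
      Separates (T.image (P 1)) (P 1 p) (P 1 q) := by
  obtain ⟨hTpq, hTcard⟩ := mem_powersetCard.1 hT
  have hpT : p ∉ T := fun h => by simpa using hTpq h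
  have hqT : q ∉ T := fun h => by simpa using hTpq h
  set e := T.orderEmbOfFin hTcard
  have hinj : ∀ a ∉ T, Injective (Fin.snoc e a : Fin (m + 2) → Fin n) := fun a ha =>
    Fin.snoc_injective_of_injective e.injective (by simpa [e, range_orderEmbOfFin] using ha)
  have hne : ∀ a b, a ≠ b → b ∉ T → (a ∈ F ↔ b ∈ F) →
      univ.image (Fin.snoc e a : Fin (m + 2) → Fin n) ≠ F := by
    intro a b hab hbT habF hF
    rw [← coe_inj, coe_image, coe_univ, Set.image_univ, Fin.range_snoc, range_orderEmbOfFin] at hF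
    have hb : b ∈ (F : Set (Fin n)) := by
      rw [mem_coe, ← habF, ← mem_coe, ← hF]
      exact Set.mem_insert a _
    rw [← hF] at hb
    rcases hb with rfl | hb
    exacts [hab rfl, hbT hb]
  rw [(hflip.generic (-1) (by norm_num) (by norm_num)).separates_image_iff hTcard,
    (hflip.generic 1 (by norm_num) one_ne_zero).separates_image_iff hTcard]
  exact hflip.simplexDet_mul_neg_iff (hinj p hpT) (hinj q hqT) (hne p q hpq hqT hF)
    (hne q p hpq.symm hpT hF.symm)

/-- Flip Proposition, part (i). -/
theorem flip_prop_i {d n : ℕ} (P : ℝ → Fin n → (Fin d → ℝ)) (F : Finset (Fin n))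
    (hflip : IsFlip d n P F) (p q : Fin n) (hpq : p ≠ q)
    (h : (p ∈ F ∧ q ∈ F) ∨ (p ∉ F ∧ q ∉ F)) :
    sepCount (Finset.univ.image (P 1)) (P 1 p) (P 1 q) =
      sepCount (Finset.univ.image (P (-1))) (P (-1) p) (P (-1) q) ∧
    (OrchardRel (Finset.univ.image (P (-1))) (P (-1) p) (P (-1) q) ↔
      OrchardRel (Finset.univ.image (P 1)) (P 1 p) (P 1 q)) := by
  obtain ⟨m, rfl⟩ := Nat.exists_eq_add_one_of_ne_zero hflip.dim_ne_zero
  have hinj_pos : Injective (P 1) := hflip.injective (by norm_num) one_ne_zero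
  have hinj_neg : Injective (P (-1)) := hflip.injective (by norm_num) (by norm_num)
  have hsep : sepCount (univ.image (P 1)) (P 1 p) (P 1 q) =
      sepCount (univ.image (P (-1))) (P (-1) p) (P (-1) q) := by
    classical
    rw [sepCount_image hinj_pos, sepCount_image hinj_neg]
    exact congrArg card (filter_congr fun T hT =>
      (hflip.separates_iff hpq (iff_iff_and_or_not_and_not.2 h) hT).symm)
  refine ⟨hsep, ?_⟩
  simp only [OrchardRel, hsep, card_image_of_injective _ hinj_pos,
    card_image_of_injective _ hinj_neg, hinj_pos.ne hpq, hinj_neg.ne hpq, false_or]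
end
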